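/- arXiv:1501.00756 — 5 statements merged into one kernel-verified Lean document; each statement's English description precedes it below -/
import Mathlib

section
/- Let x₁,…,x_N ∈ ℝ^D, let F be a finite set of functions from {0,1}^L to ℝ^D, and let H be a finite set of functions from ℝ^D to {0,1}^L. Then there exists a finite μ₀ ≥ 0 such that for every μ > μ₀, every f ∈ F, every h ∈ H, and every n ∈ {1,…,N}, the code h(x_n) is a global minimizer over z ∈ {0,1}^L of the function z ↦ ‖x_n − f(z)‖² + μ‖z − h(x_n)‖². -/
/-!
Only finitely many codes `c ∈ {0,1}^L` exist, so the reconstruction errors `‖x_n - f(c)‖²`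
(`f ∈ F`, all `n`) take finitely many values and are bounded by some `C`. A binary code
`z ≠ h(x_n)` differs from `h(x_n)` in some coordinate by exactly `1`, so for `μ > C` its penalty
`μ‖z - h(x_n)‖² ≥ μ` already exceeds the error of `h(x_n)`.
-/

open Matrix BigOperators

def binaryCodes (ι : Type*) : Set (ι → ℝ) := {z | ∀ l, z l = 0 ∨ z l = 1}

theorem binaryCodes_finite (ι : Type*) [Finite ι] : (binaryCodes ι).Finite :=
  (Set.Finite.pi' fun _ => Set.toFinite ({0, 1} : Set ℝ)).subset fun _ hz l => hz l

theorem one_le_sum_sq_sub_of_ne {ι : Type*} [Fintype ι] {z c : ι → ℝ}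
    (hz : z ∈ binaryCodes ι) (hc : c ∈ binaryCodes ι) (hne : z ≠ c) :
    1 ≤ ∑ l, (z l - c l) ^ 2 := by
  obtain ⟨l, hl⟩ := Function.ne_iff.mp hne
  have hsq : (z l - c l) ^ 2 = 1 := by
    rcases hz l with h1 | h1 <;> rcases hc l with h2 | h2 <;> simp_all
  calc (1 : ℝ) = (z l - c l) ^ 2 := hsq.symm
    _ ≤ ∑ l, (z l - c l) ^ 2 :=
      Finset.single_le_sum (f := fun l => (z l - c l) ^ 2) (fun _ _ => sq_nonneg _)
        (Finset.mem_univ l)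

theorem le_add_mul_sum_sq_sub {ι : Type*} [Fintype ι] (g : (ι → ℝ) → ℝ) (hg : ∀ z, 0 ≤ g z)
    {c z : ι → ℝ} (hc : c ∈ binaryCodes ι) (hz : z ∈ binaryCodes ι) {μ : ℝ} (hμ : g c ≤ μ) :
    g c ≤ g z + μ * ∑ l, (z l - c l) ^ 2 := by
  obtain rfl | hne := eq_or_ne z c
  · simp
  have hpen := one_le_sum_sq_sub_of_ne hz hc hne
  nlinarith [hg c, hg z]

theorem exists_forall_sum_sq_sub_le {ι κ ν : Type*} [Fintype κ] [Finite ν]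
    (x : ν → κ → ℝ) {F : Set ((ι → ℝ) → κ → ℝ)} (hF : F.Finite) {S : Set (ι → ℝ)}
    (hS : S.Finite) :
    ∃ C, ∀ f ∈ F, ∀ c ∈ S, ∀ n, ∑ i, (x n i - f c i) ^ 2 ≤ C := by
  obtain ⟨C, hC⟩ := ((hF.prod (hS.prod Set.finite_univ)).image
    fun p => ∑ i, (x p.2.2 i - p.1 p.2.1 i) ^ 2).bddAbove
  exact ⟨C, fun f hf c hc n => hC ⟨(f, c, n), ⟨hf, hc, trivial⟩, rfl⟩⟩

theorem stmt_4_general {D L N : ℕ} (x : Fin N → Fin D → ℝ)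
    (F : Set ((Fin L → ℝ) → Fin D → ℝ)) (hF : F.Finite)
    (H : Set ((Fin D → ℝ) → Fin L → ℝ))
    (hHbin : ∀ h ∈ H, ∀ v : Fin D → ℝ, ∀ l, h v l = 0 ∨ h v l = 1) :
    ∃ μ₀ : ℝ, 0 ≤ μ₀ ∧ ∀ μ : ℝ, μ₀ < μ → ∀ f ∈ F, ∀ h ∈ H, ∀ n : Fin N,
      ∀ z : Fin L → ℝ, (∀ l, z l = 0 ∨ z l = 1) →
        ∑ i, (x n i - f (h (x n)) i) ^ 2
            + μ * ∑ l, (h (x n) l - h (x n) l) ^ 2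
          ≤ ∑ i, (x n i - f z i) ^ 2 + μ * ∑ l, (z l - h (x n) l) ^ 2 := by
  obtain ⟨C, hC⟩ := exists_forall_sum_sq_sub_le x hF (binaryCodes_finite (Fin L))
  refine ⟨max C 0, le_max_right _ _, fun μ hμ f hf h hh n z hz => ?_⟩
  have hcode : h (x n) ∈ binaryCodes (Fin L) := hHbin h hh (x n)
  have herr : ∑ i, (x n i - f (h (x n)) i) ^ 2 ≤ μ :=
    (hC f hf _ hcode n).trans ((le_max_left _ _).trans hμ.le)
  simpa using le_add_mul_sum_sq_sub (fun z => ∑ i, (x n i - f z i) ^ 2)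
    (fun _ => Finset.sum_nonneg fun _ _ => sq_nonneg _) hcode hz herr

/-- For finitely many decoders `f ∈ F` and encoders `h ∈ H` (with binary outputs), there is a
finite `μ₀ ≥ 0` such that for every `μ > μ₀`, every `f ∈ F`, `h ∈ H` and every data point `x n`,
the code `h(x n)` is a global minimizer of `z ↦ ‖x n − f(z)‖² + μ‖z − h(x n)‖²` over
`z ∈ {0,1}^L`. -/
theorem stmt_4 {D L N : ℕ} (x : Fin N → Fin D → ℝ)
    (F : Set ((Fin L → ℝ) → Fin D → ℝ)) (hF : F.Finite)
    (H : Set ((Fin D → ℝ) → Fin L → ℝ)) (hH : H.Finite)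
    (hHbin : ∀ h ∈ H, ∀ v : Fin D → ℝ, ∀ l, h v l = 0 ∨ h v l = 1) :
    ∃ μ₀ : ℝ, 0 ≤ μ₀ ∧ ∀ μ : ℝ, μ₀ < μ → ∀ f ∈ F, ∀ h ∈ H, ∀ n : Fin N,
      ∀ z : Fin L → ℝ, (∀ l, z l = 0 ∨ z l = 1) →
        ∑ i, (x n i - f (h (x n)) i) ^ 2
            + μ * ∑ l, (h (x n) l - h (x n) l) ^ 2
          ≤ ∑ i, (x n i - f z i) ^ 2 + μ * ∑ l, (z l - h (x n) l) ^ 2 :=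
  stmt_4_general x F hF H hHbin
end

section
/- Let Q be a real symmetric n×n matrix, b ∈ ℝⁿ, and consider minimizing f(x) = (1/2)xᵀQx + bᵀx over x ∈ {−1,1}ⁿ. Let x ∈ {−1,1}ⁿ, let X = diag(x), let e ∈ ℝⁿ be the all-ones vector, and let λ_min be the smallest eigenvalue of Q. If λ_min·e ≥ XQXe + Xb componentwise, then x is a global minimizer of f over {−1,1}ⁿ. -/
/-!
Write `z = x + d`. For symmetric `Q`, `f z - f x = ½ dᵀQd + (Qx + b)ᵀd`. Because `x` and `z` are
sign vectors, `x_i d_i = -d_i² / 2`, so `(Qx + b)ᵀd = -½ ∑ x_i (Qx + b)_i d_i² ≥ -½ λ_min ‖d‖²`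
by the hypothesis, while `½ dᵀQd ≥ ½ λ_min ‖d‖²` by the Rayleigh bound; hence `f z ≥ f x`.
-/

open Matrix BigOperators

open scoped ComplexOrder

namespace Matrix

variable {ι : Type*} [Fintype ι]

theorem IsHermitian.posSemidef_sub_smul_one {𝕜 : Type*} [RCLike 𝕜] [DecidableEq ι]
    {A : Matrix ι ι 𝕜} (hA : A.IsHermitian) {c : ℝ} (hc : ∀ i, c ≤ hA.eigenvalues i) :
    (A - c • (1 : Matrix ι ι 𝕜)).PosSemidef := by
  rw [posSemidef_iff_isHermitian_and_spectrum_nonneg]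
  refine ⟨hA.sub (isHermitian_one.smul (IsSelfAdjoint.all c)), ?_⟩
  rw [RCLike.real_smul_eq_coe_smul (K := 𝕜), ← Algebra.algebraMap_eq_smul_one,
    ← spectrum.sub_singleton_eq, hA.spectrum_eq_image_range]
  rintro _ ⟨_, ⟨_, ⟨i, rfl⟩, rfl⟩, _, rfl, rfl⟩
  change (0 : 𝕜) ≤ _ - _
  rw [← RCLike.ofReal_sub, RCLike.ofReal_nonneg, sub_nonneg]
  exact hc i

theorem IsHermitian.mul_dotProduct_self_le_dotProduct_mulVec [DecidableEq ι]
    {A : Matrix ι ι ℝ} (hA : A.IsHermitian) {c : ℝ} (hc : ∀ i, c ≤ hA.eigenvalues i)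
    (v : ι → ℝ) : c * (v ⬝ᵥ v) ≤ v ⬝ᵥ A *ᵥ v := by
  have h := (hA.posSemidef_sub_smul_one hc).dotProduct_mulVec_nonneg v
  simp only [star_trivial, sub_mulVec, smul_mulVec, one_mulVec, dotProduct_sub,
    dotProduct_smul, smul_eq_mul] at h
  linarith

theorem IsSymm.add_dotProduct_mulVec_add {R : Type*} [CommRing R] {A : Matrix ι ι R}
    (hA : A.IsSymm) (x d : ι → R) :
    (x + d) ⬝ᵥ A *ᵥ (x + d) = x ⬝ᵥ A *ᵥ x + 2 * (d ⬝ᵥ A *ᵥ x) + d ⬝ᵥ A *ᵥ d := by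
  have hsymm : x ⬝ᵥ A *ᵥ d = d ⬝ᵥ A *ᵥ x := by
    rw [dotProduct_mulVec, ← mulVec_transpose, hA.eq, dotProduct_comm]
  rw [mulVec_add, add_dotProduct, dotProduct_add, dotProduct_add, hsymm]
  ring

theorem diagonal_mul_mul_diagonal_mulVec_one {R : Type*} [CommRing R] [DecidableEq ι]
    (A : Matrix ι ι R) (x : ι → R) (i : ι) :
    ((diagonal x * A * diagonal x) *ᵥ fun _ => 1) i = x i * (A *ᵥ x) i := by
  rw [← mulVec_mulVec, ← mulVec_mulVec, mulVec_diagonal]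
  congr 2
  funext j
  simp only [mulVec_diagonal, mul_one]

end Matrix

theorem two_mul_dotProduct_of_sq_eq_one {ι R : Type*} [Fintype ι] [CommRing R]
    {x d : ι → R} (hx : ∀ i, x i ^ 2 = 1) (hxd : ∀ i, (x i + d i) ^ 2 = 1) (g : ι → R) :
    2 * (g ⬝ᵥ d) = -∑ i, x i * g i * d i ^ 2 := by
  simp only [dotProduct, Finset.mul_sum, ← Finset.sum_neg_distrib]
  refine Finset.sum_congr rfl fun i _ => ?_
  linear_combination -(2 * g i * d i + x i * g i) * hx i + x i * g i * hxd i

theorem quadratic_le_of_sq_eq_one {ι : Type*} [Fintype ι] {Q : Matrix ι ι ℝ} (hQ : Q.IsSymm)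
    {c : ℝ} (hc : ∀ v, c * (v ⬝ᵥ v) ≤ v ⬝ᵥ Q *ᵥ v) (b : ι → ℝ) {x z : ι → ℝ}
    (hx : ∀ i, x i ^ 2 = 1) (hz : ∀ i, z i ^ 2 = 1) (hxc : ∀ i, x i * (Q *ᵥ x + b) i ≤ c) :
    (1 / 2) * (x ⬝ᵥ Q *ᵥ x) + b ⬝ᵥ x ≤ (1 / 2) * (z ⬝ᵥ Q *ᵥ z) + b ⬝ᵥ z := by
  obtain ⟨d, rfl⟩ : ∃ d, z = x + d := ⟨z - x, by abel⟩
  have hlin := two_mul_dotProduct_of_sq_eq_one hx hz (Q *ᵥ x + b)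
  have hbound : ∑ i, x i * (Q *ᵥ x + b) i * d i ^ 2 ≤ c * (d ⬝ᵥ d) := by
    rw [dotProduct, Finset.mul_sum]
    exact Finset.sum_le_sum fun i _ => by
      rw [← sq]; exact mul_le_mul_of_nonneg_right (hxc i) (sq_nonneg _)
  rw [hQ.add_dotProduct_mulVec_add, dotProduct_add]
  rw [add_dotProduct, dotProduct_comm (Q *ᵥ x)] at hlin
  linarith [hc d]

/-- Beck–Teboulle sufficient condition: if `λ_min e ≥ X Q X e + X b` componentwise, then
`x ∈ {−1,1}ⁿ` is a global minimizer of `f(x) = ½ xᵀQx + bᵀx` over `{−1,1}ⁿ`. -/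
theorem stmt_6 {n : ℕ} [NeZero n] (Q : Matrix (Fin n) (Fin n) ℝ) (hQ : Q.IsHermitian)
    (b : Fin n → ℝ) (x : Fin n → ℝ) (hx : ∀ i, x i = 1 ∨ x i = -1)
    (hcond : ∀ i,
      (Matrix.diagonal x * Q * Matrix.diagonal x).mulVec (fun _ => (1 : ℝ)) i
          + (Matrix.diagonal x).mulVec b i
        ≤ Finset.univ.inf' Finset.univ_nonempty hQ.eigenvalues) :
    ∀ z : Fin n → ℝ, (∀ i, z i = 1 ∨ z i = -1) →
      (1 / 2) * (x ⬝ᵥ Q.mulVec x) + b ⬝ᵥ x ≤ (1 / 2) * (z ⬝ᵥ Q.mulVec z) + b ⬝ᵥ z := by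
  intro z hz
  have hmin : ∀ i, Finset.univ.inf' Finset.univ_nonempty hQ.eigenvalues ≤ hQ.eigenvalues i :=
    fun i => Finset.inf'_le _ (Finset.mem_univ i)
  refine quadratic_le_of_sq_eq_one (isHermitian_iff_isSymm.mp hQ)
    (hQ.mul_dotProduct_self_le_dotProduct_mulVec hmin) b (fun i => sq_eq_one_iff.mpr (hx i))
    (fun i => sq_eq_one_iff.mpr (hz i)) fun i => ?_
  simpa only [diagonal_mul_mul_diagonal_mulVec_one, mulVec_diagonal, Pi.add_apply, mul_add] using hcond i
end

section
/- Let Q be a real symmetric n×n matrix, b ∈ ℝⁿ, and consider minimizing f(x) = (1/2)xᵀQx + bᵀx over x ∈ {−1,1}ⁿ. Let x ∈ {−1,1}ⁿ, X = diag(x), and e the all-ones vector. If x is a global minimizer of f over {−1,1}ⁿ, then XQXe + Xb ≤ d componentwise, where d ∈ ℝⁿ is the vector of diagonal entries of Q, d_i = q_ii. -/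
/-!
Flipping the sign of the `i`-th coordinate of `x` moves it to `x - 2 xᵢ eᵢ`, which is again
feasible. For symmetric `Q` the objective changes by `-2 xᵢ ((Qx)ᵢ + bᵢ) + 2 xᵢ² qᵢᵢ`, and
`xᵢ² = 1`; global minimality makes this change nonnegative, which is the `i`-th inequality.
-/

open Matrix

section

variable {ι R : Type*} [DecidableEq ι]

theorem add_smul_single_neg_two_mul_eq_one_or_eq_neg_one [CommRing R] {x : ι → R}
    (hx : ∀ j, x j = 1 ∨ x j = -1) (i : ι) (j : ι) :
    (x + (-2 * x i) • Pi.single i 1 : ι → R) j = 1 ∨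
      (x + (-2 * x i) • Pi.single i 1 : ι → R) j = -1 := by
  rcases eq_or_ne j i with rfl | hji
  · rcases hx j with h | h <;> simp [h] <;> norm_num
  · simpa [hji] using hx j

variable [Fintype ι]

theorem Matrix.IsSymm.dotProduct_mulVec_add_smul_single [CommRing R] {Q : Matrix ι ι R}
    (hQ : Q.IsSymm) (x : ι → R) (i : ι) (t : R) :
    (x + t • Pi.single i 1) ⬝ᵥ Q *ᵥ (x + t • Pi.single i 1)
      = x ⬝ᵥ Q *ᵥ x + 2 * t * (Q *ᵥ x) i + t ^ 2 * Q i i := by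
  have hleft : Pi.single i 1 ⬝ᵥ Q *ᵥ x = (Q *ᵥ x) i := single_one_dotProduct i _
  have hright : x ⬝ᵥ Q *ᵥ Pi.single i 1 = (Q *ᵥ x) i := by
    rw [dotProduct_mulVec, ← mulVec_transpose, hQ.eq, dotProduct_single_one]
  have hdiag : Pi.single i 1 ⬝ᵥ Q *ᵥ Pi.single i 1 = Q i i := by
    rw [single_one_dotProduct, mulVec_single_one, col_apply]
  simp only [mulVec_add, mulVec_smul, dotProduct_add, add_dotProduct, dotProduct_smul,
    smul_dotProduct, smul_eq_mul, hleft, hright, hdiag]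
  ring

theorem Matrix.diagonal_mul_mul_diagonal_mulVec_one_s7 [CommSemiring R] (x : ι → R)
    (Q : Matrix ι ι R) :
    (diagonal x * Q * diagonal x) *ᵥ (fun _ => 1) = x * Q *ᵥ x := by
  ext i
  rw [← mulVec_mulVec, ← mulVec_mulVec, mulVec_diagonal, Pi.mul_apply]
  congr 2
  ext j
  rw [mulVec_diagonal, mul_one]

end

/-- Beck–Teboulle necessary condition: if `x ∈ {−1,1}ⁿ` is a global minimizer of
`f(x) = ½ xᵀQx + bᵀx` over `{−1,1}ⁿ`, then `X Q X e + X b ≤ diag(Q) e` componentwise. -/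
theorem stmt_7 {n : ℕ} (Q : Matrix (Fin n) (Fin n) ℝ) (hQ : Q.IsHermitian)
    (b : Fin n → ℝ) (x : Fin n → ℝ) (hx : ∀ i, x i = 1 ∨ x i = -1)
    (hmin : ∀ z : Fin n → ℝ, (∀ i, z i = 1 ∨ z i = -1) →
      (1 / 2) * (x ⬝ᵥ Q.mulVec x) + b ⬝ᵥ x ≤ (1 / 2) * (z ⬝ᵥ Q.mulVec z) + b ⬝ᵥ z) :
    ∀ i,
      (Matrix.diagonal x * Q * Matrix.diagonal x).mulVec (fun _ => (1 : ℝ)) i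
          + (Matrix.diagonal x).mulVec b i
        ≤ Q i i := by
  intro i
  have hxi : x i ^ 2 * Q i i = Q i i := by rcases hx i with h | h <;> simp [h]
  have hflip := hmin _ (add_smul_single_neg_two_mul_eq_one_or_eq_neg_one hx i)
  rw [(isHermitian_iff_isSymm.mp hQ).dotProduct_mulVec_add_smul_single, dotProduct_add,
    dotProduct_smul, dotProduct_single_one, smul_eq_mul] at hflip
  rw [diagonal_mul_mul_diagonal_mulVec_one_s7, Pi.mul_apply, mulVec_diagonal]
  linarith
end

section
/- Let Q be a real symmetric n×n matrix, b ∈ ℝⁿ, and consider minimizing f(x) = (1/2)xᵀQx + bᵀx over x ∈ {−1,1}ⁿ. Let x ∈ {−1,1}ⁿ, X = diag(x), e the all-ones vector, and define q̃ ∈ ℝⁿ by q̃_i = q_ii − Σ_{j≠i} |q_ij| for i = 1,…,n. If q̃ ≥ XQXe + Xb componentwise, then x is a global minimizer of f over {−1,1}ⁿ. -/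
open Matrix BigOperators

/-!
Write `z = x + d` with `d = z - x`. For symmetric `Q` the objective `f = quadObjective Q b`
changes by `(Qx + b)ᵀd + ½ dᵀQd`, and the Gershgorin-type estimate `dᵀQd ≥ ∑ q̃ᵢ dᵢ²`
(with `q̃ = diagMargin Q`) bounds the quadratic part. Each `dᵢ` is `0` or `-2xᵢ`, so
`f z - f x ≥ ∑ᵢ ((Qx + b)ᵢ dᵢ + ½ q̃ᵢ dᵢ²) = 2 ∑_{dᵢ ≠ 0} (q̃ᵢ - xᵢ (Qx + b)ᵢ) ≥ 0`,
and `xᵢ (Qx + b)ᵢ` is exactly `(XQXe + Xb)ᵢ`.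
-/

open Finset

variable {ι : Type*} [Fintype ι]

def diagMargin [DecidableEq ι] (Q : Matrix ι ι ℝ) (i : ι) : ℝ :=
  Q i i - ∑ j ∈ univ.erase i, |Q i j|

lemma sum_sum_erase_comm [DecidableEq ι] (g : ι → ι → ℝ) :
    ∑ i, ∑ j ∈ univ.erase i, g i j = ∑ i, ∑ j ∈ univ.erase i, g j i := by
  simp only [sum_erase_eq_sub (mem_univ _), sum_sub_distrib]
  rw [sum_comm]

lemma dotProduct_mulVec_self_eq_add_sum_erase [DecidableEq ι] (Q : Matrix ι ι ℝ) (u : ι → ℝ) :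
    u ⬝ᵥ Q *ᵥ u = ∑ i, Q i i * u i ^ 2 + ∑ i, ∑ j ∈ univ.erase i, Q i j * u i * u j := by
  rw [← sum_add_distrib]
  refine sum_congr rfl fun i _ => ?_
  rw [mulVec, dotProduct, mul_sum, ← add_sum_erase _ _ (mem_univ i)]
  congr 1
  · ring
  · exact sum_congr rfl fun j _ => by ring

lemma Matrix.IsSymm.sum_diagMargin_mul_sq_le [DecidableEq ι] {Q : Matrix ι ι ℝ}
    (hQ : Q.IsSymm) (u : ι → ℝ) :
    ∑ i, diagMargin Q i * u i ^ 2 ≤ u ⬝ᵥ Q *ᵥ u := by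
  have hoff : ∀ i, ∀ j ∈ univ.erase i,
      -(|Q i j| * u i ^ 2) / 2 - |Q i j| * u j ^ 2 / 2 ≤ Q i j * u i * u j := by
    intro i j _
    nlinarith [abs_nonneg (Q i j), neg_abs_le (Q i j), le_abs_self (Q i j),
      sq_nonneg (u i + u j), sq_nonneg (u i - u j)]
  have hsum := sum_le_sum (s := univ) fun i _ => sum_le_sum (hoff i)
  -- symmetry lets the `uⱼ²` half of the off-diagonal bound be re-indexed as a `uᵢ²` term
  have hswap : ∑ i, ∑ j ∈ univ.erase i, |Q i j| * u j ^ 2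
      = ∑ i, ∑ j ∈ univ.erase i, |Q i j| * u i ^ 2 := by
    rw [sum_sum_erase_comm]
    simp only [hQ.apply]
  simp only [sum_sub_distrib, ← sum_div, sum_neg_distrib, hswap] at hsum
  rw [dotProduct_mulVec_self_eq_add_sum_erase]
  simp only [diagMargin, sub_mul, sum_mul, sum_sub_distrib]
  linarith

noncomputable def quadObjective (Q : Matrix ι ι ℝ) (b x : ι → ℝ) : ℝ :=
  1 / 2 * (x ⬝ᵥ Q *ᵥ x) + b ⬝ᵥ x

lemma Matrix.IsSymm.quadObjective_add {Q : Matrix ι ι ℝ} (hQ : Q.IsSymm) (b x d : ι → ℝ) :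
    quadObjective Q b (x + d)
      = quadObjective Q b x + (Q *ᵥ x + b) ⬝ᵥ d + 1 / 2 * (d ⬝ᵥ Q *ᵥ d) := by
  have hxd : x ⬝ᵥ Q *ᵥ d = Q *ᵥ x ⬝ᵥ d := by
    rw [dotProduct_mulVec, ← mulVec_transpose, hQ.eq]
  have hdx : d ⬝ᵥ Q *ᵥ x = Q *ᵥ x ⬝ᵥ d := dotProduct_comm _ _
  simp only [quadObjective, mulVec_add, add_dotProduct, dotProduct_add, hxd, hdx]
  ring

lemma add_half_mul_sq_sub_nonneg_of_sign {x z g m : ℝ} (hx : x = 1 ∨ x = -1)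
    (hz : z = 1 ∨ z = -1) (h : x * g ≤ m) : 0 ≤ g * (z - x) + m / 2 * (z - x) ^ 2 := by
  rcases hx with rfl | rfl <;> rcases hz with rfl | rfl <;> linarith

lemma Matrix.IsSymm.quadObjective_le_of_mul_le_diagMargin [DecidableEq ι] {Q : Matrix ι ι ℝ}
    (hQ : Q.IsSymm) {b x z : ι → ℝ} (hx : ∀ i, x i = 1 ∨ x i = -1)
    (hz : ∀ i, z i = 1 ∨ z i = -1) (h : ∀ i, x i * (Q *ᵥ x + b) i ≤ diagMargin Q i) :
    quadObjective Q b x ≤ quadObjective Q b z := by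
  have hgain : 0 ≤ ∑ i, ((Q *ᵥ x + b) i * (z - x) i + diagMargin Q i / 2 * (z - x) i ^ 2) :=
    sum_nonneg fun i _ => add_half_mul_sq_sub_nonneg_of_sign (hx i) (hz i) (h i)
  have hquad := hQ.sum_diagMargin_mul_sq_le (z - x)
  rw [sum_add_distrib] at hgain
  calc quadObjective Q b x
      ≤ quadObjective Q b x + (Q *ᵥ x + b) ⬝ᵥ (z - x) + 1 / 2 * ((z - x) ⬝ᵥ Q *ᵥ (z - x)) := by
        simp only [dotProduct, div_mul_eq_mul_div, ← sum_div] at hgain hquad ⊢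
        linarith
    _ = quadObjective Q b z := by
        rw [← hQ.quadObjective_add, add_sub_cancel]

lemma diagonal_mul_mul_diagonal_mulVec_one_add [DecidableEq ι] (Q : Matrix ι ι ℝ)
    (b x : ι → ℝ) (i : ι) :
    ((diagonal x * Q * diagonal x) *ᵥ fun _ => 1) i + (diagonal x *ᵥ b) i
      = x i * (Q *ᵥ x + b) i := by
  have hx : diagonal x *ᵥ (fun _ => 1) = x := funext fun j => by simp [mulVec_diagonal]
  simp only [← mulVec_mulVec, hx, mulVec_diagonal, Pi.add_apply, mul_add]

/-- Jeyakumar et al. sufficient condition: with `q̃_i = q_ii − Σ_{j≠i} |q_ij|`, if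
`q̃ ≥ X Q X e + X b` componentwise then `x ∈ {−1,1}ⁿ` is a global minimizer of
`f(x) = ½ xᵀQx + bᵀx` over `{−1,1}ⁿ`. -/
theorem stmt_8 {n : ℕ} (Q : Matrix (Fin n) (Fin n) ℝ) (hQ : Q.IsHermitian)
    (b : Fin n → ℝ) (x : Fin n → ℝ) (hx : ∀ i, x i = 1 ∨ x i = -1)
    (hcond : ∀ i,
      (Matrix.diagonal x * Q * Matrix.diagonal x).mulVec (fun _ => (1 : ℝ)) i
          + (Matrix.diagonal x).mulVec b i
        ≤ Q i i - ∑ j ∈ Finset.univ.erase i, |Q i j|) :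
    ∀ z : Fin n → ℝ, (∀ i, z i = 1 ∨ z i = -1) →
      (1 / 2) * (x ⬝ᵥ Q.mulVec x) + b ⬝ᵥ x ≤ (1 / 2) * (z ⬝ᵥ Q.mulVec z) + b ⬝ᵥ z := by
  intro z hz
  have hmargin (i : Fin n) : x i * (Q *ᵥ x + b) i ≤ diagMargin Q i := by
    rw [← diagonal_mul_mul_diagonal_mulVec_one_add Q b x i]
    exact hcond i
  exact (isHermitian_iff_isSymm.mp hQ).quadObjective_le_of_mul_le_diagMargin hx hz hmargin
end

section
/- Let Q be a real symmetric positive semidefinite n×n matrix, b ∈ ℝⁿ, f(x) = (1/2)xᵀQx + bᵀx, and λ_min the smallest eigenvalue of Q. Suppose x ∈ [−1,1]ⁿ is a global minimizer of f over [−1,1]ⁿ, and let y = sgn(x) ∈ {−1,1}ⁿ (where sgn(t) = 1 if t ≥ 0 and −1 if t < 0) and Y = diag(y). If YQ(y − x) ≤ λ_min·e componentwise, then y is a global minimizer of f over {−1,1}ⁿ. -/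
/-!
Write `g = Qx + b` for the gradient at the box minimizer `x`. For a sign vector `z` and
`d = z - y`, `f z - f y = dᵀ g + dᵀ Q (y - x) + ½ dᵀ Q d`.
First-order optimality of `x` on the box makes each `d i * g i` nonnegative: where
`g i ≠ 0`, `x i` sits at the endpoint `-sgn (g i)`, which is then also `y i`. Coordinates where
`d i ≠ 0` have `d i = -2 y i`, so the hypothesis `Y Q (y - x) ≤ λ_min e` bounds the middle term
below by `-(λ_min / 2) ‖d‖²`, which the Rayleigh bound `λ_min ‖d‖² ≤ dᵀ Q d` cancels.
-/

open Matrix Set Filter Topology MatrixOrder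

lemma nonneg_of_forall_Ioc_mul_add_sq_mul_nonneg {c q : ℝ}
    (h : ∀ t ∈ Ioc (0 : ℝ) 1, 0 ≤ t * c + t ^ 2 * q) : 0 ≤ c := by
  have hlim : Tendsto (fun t : ℝ => c + t * q) (𝓝 0) (𝓝 c) := by
    simpa using (by fun_prop : Continuous fun t : ℝ => c + t * q).tendsto 0
  refine ge_of_tendsto (hlim.mono_left (nhdsWithin_le_nhds (s := Ioi 0))) ?_
  filter_upwards [Ioc_mem_nhdsGT zero_lt_one] with t ht
  have := h t ht
  nlinarith [ht.1]

/-- The sign with `sgn 0 = 1`, unlike `Real.sign` and `SignType.sign`. -/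
noncomputable def sgn (t : ℝ) : ℝ := if 0 ≤ t then 1 else -1

lemma sgn_eq_one_or_eq_neg_one (t : ℝ) : sgn t = 1 ∨ sgn t = -1 := by
  unfold sgn; split_ifs <;> simp

lemma sub_sgn_mul_nonneg {x g z : ℝ} (hopt : ∀ c ∈ Icc (-1 : ℝ) 1, 0 ≤ (c - x) * g)
    (hx : x ∈ Icc (-1) 1) (hz : z ∈ Icc (-1) 1) : 0 ≤ (z - sgn x) * g := by
  have h₁ := hopt 1 ⟨by norm_num, le_rfl⟩
  have h₂ := hopt (-1) ⟨le_rfl, by norm_num⟩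
  obtain ⟨hz₁, hz₂⟩ := hz
  unfold sgn
  split_ifs with h <;> rcases lt_trichotomy g 0 with hg | hg | hg <;> nlinarith [hx.1, hx.2]

lemma half_mul_sq_sub_add_sub_mul_nonneg {y z u lam : ℝ} (hy : y = 1 ∨ y = -1)
    (hz : z = 1 ∨ z = -1) (hu : y * u ≤ lam) : 0 ≤ lam / 2 * (z - y) ^ 2 + (z - y) * u := by
  rcases hy with rfl | rfl <;> rcases hz with rfl | rfl <;> linarith

noncomputable def quadObj {ι : Type*} [Fintype ι] (Q : Matrix ι ι ℝ) (b x : ι → ℝ) : ℝ :=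
  1 / 2 * (x ⬝ᵥ Q *ᵥ x) + b ⬝ᵥ x

section
variable {ι : Type*} [Fintype ι] {Q : Matrix ι ι ℝ} {b : ι → ℝ}

lemma Matrix.IsSymm.dotProduct_mulVec_comm (hQ : Q.IsSymm) (v w : ι → ℝ) :
    v ⬝ᵥ Q *ᵥ w = w ⬝ᵥ Q *ᵥ v := by
  rw [dotProduct_mulVec, ← mulVec_transpose, hQ.eq, dotProduct_comm]

lemma quadObj_add (hQ : Q.IsSymm) (x d : ι → ℝ) :
    quadObj Q b (x + d) = quadObj Q b x + d ⬝ᵥ (Q *ᵥ x + b) + 1 / 2 * (d ⬝ᵥ Q *ᵥ d) := by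
  simp only [quadObj, mulVec_add, add_dotProduct, dotProduct_add, hQ.dotProduct_mulVec_comm x d,
    dotProduct_comm d b]
  ring

lemma IsMinOn.dotProduct_sub_mulVec_add_nonneg {S : Set (ι → ℝ)} {x w : ι → ℝ}
    (hmin : IsMinOn (quadObj Q b) S x) (hQ : Q.IsSymm) (hS : Convex ℝ S) (hx : x ∈ S)
    (hw : w ∈ S) : 0 ≤ (w - x) ⬝ᵥ (Q *ᵥ x + b) := by
  refine nonneg_of_forall_Ioc_mul_add_sq_mul_nonneg (q := 1 / 2 * ((w - x) ⬝ᵥ Q *ᵥ (w - x)))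
    fun t ht => ?_
  have hle := isMinOn_iff.mp hmin _ (hS.add_smul_sub_mem hx hw (Ioc_subset_Icc_self ht))
  rw [quadObj_add hQ] at hle
  simp only [smul_dotProduct, mulVec_smul, dotProduct_smul, smul_eq_mul] at hle
  linarith

lemma IsMinOn.sub_mul_mulVec_add_nonneg [DecidableEq ι] {l u x : ι → ℝ}
    (hmin : IsMinOn (quadObj Q b) (Icc l u) x) (hQ : Q.IsSymm) (hx : x ∈ Icc l u) (i : ι)
    {c : ℝ} (hc : c ∈ Icc (l i) (u i)) : 0 ≤ (c - x i) * (Q *ᵥ x + b) i := by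
  have hupd : Function.update x i c ∈ Icc l u := by
    constructor <;> intro j <;> rcases eq_or_ne j i with rfl | hj <;>
      simp_all [Function.update_of_ne, hx.1 j, hx.2 j]
  have hsub : Function.update x i c - x = Pi.single i (c - x i) := by
    ext j; rcases eq_or_ne j i with rfl | hj <;> simp_all [Function.update_of_ne]
  have := hmin.dotProduct_sub_mulVec_add_nonneg hQ (convex_Icc l u) hx hupd
  rwa [hsub, single_dotProduct] at this

lemma Matrix.IsHermitian.inf_eigenvalues_mul_dotProduct_self_le [DecidableEq ι] [Nonempty ι]
    (hQ : Q.IsHermitian) (v : ι → ℝ) :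
    Finset.univ.inf' Finset.univ_nonempty hQ.eigenvalues * (v ⬝ᵥ v) ≤ v ⬝ᵥ Q *ᵥ v := by
  have hle : algebraMap ℝ _ (Finset.univ.inf' Finset.univ_nonempty hQ.eigenvalues) ≤ Q := by
    rw [algebraMap_le_iff_le_spectrum (ha := hQ.isSelfAdjoint),
      hQ.spectrum_real_eq_range_eigenvalues]
    rintro _ ⟨i, rfl⟩
    exact Finset.inf'_le _ (Finset.mem_univ i)
  simpa [sub_mulVec, dotProduct_sub, Algebra.algebraMap_eq_smul_one, smul_mulVec]
    using (le_iff.mp hle).dotProduct_mulVec_nonneg v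

lemma Matrix.IsHermitian.half_dotProduct_mulVec_add_nonneg [DecidableEq ι] [Nonempty ι]
    (hQ : Q.IsHermitian) {y z v : ι → ℝ} (hy : ∀ i, y i = 1 ∨ y i = -1)
    (hz : ∀ i, z i = 1 ∨ z i = -1)
    (hv : ∀ i, y i * (Q *ᵥ v) i ≤ Finset.univ.inf' Finset.univ_nonempty hQ.eigenvalues) :
    0 ≤ 1 / 2 * ((z - y) ⬝ᵥ Q *ᵥ (z - y)) + (z - y) ⬝ᵥ Q *ᵥ v := by
  set lam := Finset.univ.inf' Finset.univ_nonempty hQ.eigenvalues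
  have hray := hQ.inf_eigenvalues_mul_dotProduct_self_le (z - y)
  have hcoord : 0 ≤ lam / 2 * ((z - y) ⬝ᵥ (z - y)) + (z - y) ⬝ᵥ Q *ᵥ v := by
    simp only [dotProduct, Finset.mul_sum, ← Finset.sum_add_distrib]
    exact Finset.sum_nonneg fun i _ => by
      simpa [sq] using half_mul_sq_sub_add_sub_mul_nonneg (hy i) (hz i) (hv i)
  linarith

end

/-- If `x` minimizes `f(x) = ½ xᵀQx + bᵀx` (with `Q` positive semidefinite) over the box
`[−1,1]ⁿ`, `y = sgn(x)`, and `Y Q (y − x) ≤ λ_min e` componentwise, then `y` is a global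
minimizer of `f` over `{−1,1}ⁿ`. -/
theorem stmt_11 {n : ℕ} [NeZero n] (Q : Matrix (Fin n) (Fin n) ℝ) (hQ : Q.PosSemidef)
    (b : Fin n → ℝ) (x : Fin n → ℝ) (hx : ∀ i, -1 ≤ x i ∧ x i ≤ 1)
    (hmin : ∀ z : Fin n → ℝ, (∀ i, -1 ≤ z i ∧ z i ≤ 1) →
      (1 / 2) * (x ⬝ᵥ Q.mulVec x) + b ⬝ᵥ x ≤ (1 / 2) * (z ⬝ᵥ Q.mulVec z) + b ⬝ᵥ z)
    (y : Fin n → ℝ) (hy : y = fun i => if 0 ≤ x i then (1 : ℝ) else -1)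
    (hcond : ∀ i,
      (Matrix.diagonal y).mulVec (Q.mulVec (y - x)) i
        ≤ Finset.univ.inf' Finset.univ_nonempty hQ.isHermitian.eigenvalues) :
    ∀ z : Fin n → ℝ, (∀ i, z i = 1 ∨ z i = -1) →
      (1 / 2) * (y ⬝ᵥ Q.mulVec y) + b ⬝ᵥ y ≤ (1 / 2) * (z ⬝ᵥ Q.mulVec z) + b ⬝ᵥ z := by
  intro z hz
  have hsymm : Q.IsSymm := isHermitian_iff_isSymm.mp hQ.isHermitian
  have hy_sgn : ∀ i, y i = sgn (x i) := fun i => by rw [hy]; rfl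
  have hx_box : x ∈ Icc (-1) 1 := ⟨fun i => (hx i).1, fun i => (hx i).2⟩
  have hx_min : IsMinOn (quadObj Q b) (Icc (-1) 1) x :=
    isMinOn_iff.mpr fun w hw => hmin w fun i => ⟨hw.1 i, hw.2 i⟩
  have hgrad : 0 ≤ (z - y) ⬝ᵥ (Q *ᵥ x + b) := Finset.sum_nonneg fun i _ => by
    rw [Pi.sub_apply, hy_sgn]
    refine sub_sgn_mul_nonneg (fun c hc => hx_min.sub_mul_mulVec_add_nonneg hsymm hx_box i hc)
      (hx i) ?_
    rcases hz i with h | h <;> simp [h]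
  have hcurv := hQ.isHermitian.half_dotProduct_mulVec_add_nonneg
    (fun i => hy_sgn i ▸ sgn_eq_one_or_eq_neg_one (x i)) hz (v := y - x)
    (by simpa only [mulVec_diagonal] using hcond)
  have hgrad_y : Q *ᵥ y + b = (Q *ᵥ x + b) + Q *ᵥ (y - x) := by rw [mulVec_sub]; abel
  show quadObj Q b y ≤ quadObj Q b z
  rw [← add_sub_cancel y z, quadObj_add hsymm, hgrad_y, dotProduct_add]
  linarith
end
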